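/- Suppose there is d < ∞ with f''_n(1) ≤ d·(f'_n(1) + f'_n(1)²) a.s. for all n. Let S_n = Σ_{i=1}^n log f'_i(1) and L_n = min_{0≤k≤n} S_k. Then almost surely E[Z_n(Z_n - 1) | environment, Z_0 = 1] = f''_{0,n}(1) ≤ 2d·(n+1)·e^{S_n}·e^{S_n - L_n}. -/

import Mathlib

open MeasureTheory

/-- The `k`-fold convolution of an offspring distribution `q`: the law of the
sum of `k` i.i.d. individuals' offspring numbers. -/
noncomputable def convPow (q : PMF ℕ) : ℕ → PMF ℕ
  | 0 => PMF.pure 0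
  | k + 1 => (convPow q k).bind fun s => q.map fun x => x + s

/-- The quenched law of the branching process in the (fixed) environment
`env : ℕ → PMF ℕ`, started from `z` individuals: `bpre env z n` is the law of
`Z_n` given the environment and `Z_0 = z`. -/
noncomputable def bpre (env : ℕ → PMF ℕ) (z : ℕ) : ℕ → PMF ℕ
  | 0 => PMF.pure z
  | n + 1 => (bpre env z n).bind fun k => convPow (env n) k

/-- The mean number of offspring of an offspring distribution `q`. -/
noncomputable def pmfMean (q : PMF ℕ) : ℝ :=
  ∑' j : ℕ, (j : ℝ) * (q j).toReal

/-- The random walk associated with the environment: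
`S_n = ∑_{i<n} log f_i'(1)`. -/
noncomputable def Swalk (env : ℕ → PMF ℕ) (n : ℕ) : ℝ :=
  ∑ i ∈ Finset.range n, Real.log (pmfMean (env i))

/-- The running minimum `L_n = min_{0 ≤ k ≤ n} S_k` of the associated walk. -/
noncomputable def Lmin (env : ℕ → PMF ℕ) (n : ℕ) : ℝ :=
  (Finset.range (n + 1)).inf' Finset.nonempty_range_add_one (Swalk env)

/-! Let `m_n` and `v_n` be the mean and the second factorial moment of `Z_n` given the
environment, and `μ_n`, `σ_n` those of `f_n`; they are computed in `ℝ≥0∞`, where no summability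
has to be tracked. A sum of `k` i.i.d. copies of `ξ` has second factorial moment
`k E[ξ(ξ-1)] + k(k-1) (Eξ)²`, so conditioning on `Z_n` gives `m_{n+1} = μ_n m_n` and
`v_{n+1} = σ_n m_n + μ_n² v_n`. Hence `m_n = e^{S_n}`, and `v_n ≤ 2d(n+1) e^{2S_n - L_n}`
propagates by induction: since `σ_n ≤ d(μ_n + μ_n²)`, the new terms `d μ_n e^{S_n} = d e^{S_{n+1}}`
and `d μ_n² e^{S_n} = d μ_n e^{S_{n+1}}` are each at most `d e^{2S_{n+1} - L_{n+1}}`, because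
`L_{n+1} ≤ S_{n+1}` and `L_{n+1} ≤ S_n`, while the old term is multiplied by `μ_n²` and `L` is
nonincreasing. -/

open ENNReal

theorem Nat.descFactorial_two_add (x s : ℕ) :
    (x + s).descFactorial 2 = x.descFactorial 2 + s.descFactorial 2 + 2 * x * s := by
  zify [Nat.cast_descFactorial_two]
  ring

namespace PMF

variable {α β : Type*}

noncomputable def lexpect (p : PMF α) (g : α → ℝ≥0∞) : ℝ≥0∞ :=
  ∑' a, g a * p a

theorem lexpect_pure (a : α) (g : α → ℝ≥0∞) : (PMF.pure a).lexpect g = g a := by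
  rw [lexpect, tsum_eq_single a fun b hb => by simp [PMF.pure_apply, hb]]
  simp

theorem lexpect_bind (p : PMF α) (f : α → PMF β) (g : β → ℝ≥0∞) :
    (p.bind f).lexpect g = p.lexpect fun a => (f a).lexpect g := by
  simp only [lexpect, PMF.bind_apply, ← ENNReal.tsum_mul_left, ← ENNReal.tsum_mul_right]
  rw [ENNReal.tsum_comm]
  exact tsum_congr fun a => tsum_congr fun b => by ring

theorem lexpect_map (p : PMF α) (h : α → β) (g : β → ℝ≥0∞) :
    (p.map h).lexpect g = p.lexpect (g ∘ h) := by
  rw [PMF.map, lexpect_bind]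
  exact tsum_congr fun a => by simp only [Function.comp_apply, lexpect_pure]

theorem lexpect_add (p : PMF α) (g h : α → ℝ≥0∞) :
    p.lexpect (fun a => g a + h a) = p.lexpect g + p.lexpect h := by
  simp only [lexpect, add_mul, ENNReal.tsum_add]

theorem lexpect_const_mul (p : PMF α) (c : ℝ≥0∞) (g : α → ℝ≥0∞) :
    p.lexpect (fun a => c * g a) = c * p.lexpect g := by
  simp only [lexpect, mul_assoc, ENNReal.tsum_mul_left]

theorem lexpect_mul_const (p : PMF α) (c : ℝ≥0∞) (g : α → ℝ≥0∞) :
    p.lexpect (fun a => g a * c) = p.lexpect g * c := by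
  simp only [mul_comm _ c, lexpect_const_mul]

theorem lexpect_const (p : PMF α) (c : ℝ≥0∞) : p.lexpect (fun _ => c) = c := by
  rw [lexpect, ENNReal.tsum_mul_left, p.tsum_coe, mul_one]

theorem lexpect_ofReal (p : PMF α) {g : α → ℝ} (hg : ∀ a, 0 ≤ g a)
    (hs : Summable fun a => g a * (p a).toReal) :
    p.lexpect (fun a => ENNReal.ofReal (g a)) = ENNReal.ofReal (∑' a, g a * (p a).toReal) := by
  rw [lexpect, ENNReal.ofReal_tsum_of_nonneg (fun a => mul_nonneg (hg a) toReal_nonneg) hs]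
  exact tsum_congr fun a => by rw [ENNReal.ofReal_mul (hg a), ofReal_toReal (p.apply_ne_top a)]

noncomputable def lmean (p : PMF ℕ) : ℝ≥0∞ :=
  p.lexpect fun j => j

noncomputable def lfactorialMoment2 (p : PMF ℕ) : ℝ≥0∞ :=
  p.lexpect fun j => (j.descFactorial 2 : ℕ)

theorem lexpect_natCast (p : PMF ℕ) : p.lexpect (fun j => (j : ℝ≥0∞)) = p.lmean := rfl

theorem lexpect_descFactorial_two (p : PMF ℕ) :
    p.lexpect (fun j => ((j.descFactorial 2 : ℕ) : ℝ≥0∞)) = p.lfactorialMoment2 := rfl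

theorem lmean_eq_ofReal {p : PMF ℕ} (h : Summable fun j : ℕ => (j : ℝ) * (p j).toReal) :
    p.lmean = ENNReal.ofReal (pmfMean p) := by
  rw [pmfMean, ← lexpect_ofReal p (fun j => Nat.cast_nonneg j) h]
  simp only [ENNReal.ofReal_natCast, lexpect_natCast]

theorem lfactorialMoment2_eq_ofReal {p : PMF ℕ}
    (h : Summable fun j : ℕ => (j : ℝ) * ((j : ℝ) - 1) * (p j).toReal) :
    p.lfactorialMoment2 = ENNReal.ofReal (∑' j : ℕ, (j : ℝ) * ((j : ℝ) - 1) * (p j).toReal) := by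
  simp only [← Nat.cast_descFactorial_two] at h ⊢
  rw [← lexpect_ofReal p (fun j => Nat.cast_nonneg _) h]
  simp only [ENNReal.ofReal_natCast, lexpect_descFactorial_two]

theorem toReal_lfactorialMoment2 (p : PMF ℕ) :
    p.lfactorialMoment2.toReal = ∑' j : ℕ, (j : ℝ) * ((j : ℝ) - 1) * (p j).toReal := by
  rw [lfactorialMoment2, lexpect, ENNReal.tsum_toReal_eq fun j => mul_ne_top (natCast_ne_top _)
    (p.apply_ne_top j)]
  simp only [toReal_mul, toReal_natCast, Nat.cast_descFactorial_two]

theorem lmean_bind (p : PMF α) (f : α → PMF ℕ) :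
    (p.bind f).lmean = p.lexpect fun a => (f a).lmean :=
  lexpect_bind p f _

theorem lfactorialMoment2_bind (p : PMF α) (f : α → PMF ℕ) :
    (p.bind f).lfactorialMoment2 = p.lexpect fun a => (f a).lfactorialMoment2 :=
  lexpect_bind p f _

theorem lmean_map_add (q : PMF ℕ) (s : ℕ) : (q.map (· + s)).lmean = q.lmean + s := by
  rw [← lexpect_natCast, lexpect_map]
  simp only [Function.comp_def, Nat.cast_add, lexpect_add, lexpect_const, lexpect_natCast]

theorem lfactorialMoment2_map_add (q : PMF ℕ) (s : ℕ) :
    (q.map (· + s)).lfactorialMoment2 =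
      q.lfactorialMoment2 + (s.descFactorial 2 : ℕ) + 2 * s * q.lmean := by
  rw [← lexpect_descFactorial_two, lexpect_map]
  simp only [Function.comp_def, Nat.descFactorial_two_add,
    Nat.cast_add, Nat.cast_mul, lexpect_add, lexpect_const, lexpect_const_mul, lexpect_mul_const,
    lexpect_natCast, lexpect_descFactorial_two]
  ring

end PMF

open PMF

theorem lmean_convPow (q : PMF ℕ) (k : ℕ) : (convPow q k).lmean = k * q.lmean := by
  induction k with
  | zero => rw [convPow, lmean, lexpect_pure]; simp
  | succ k ih =>
    rw [convPow, lmean_bind]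
    simp only [lmean_map_add, lexpect_add, lexpect_const, lexpect_natCast, ih]
    push_cast
    ring

theorem lfactorialMoment2_convPow (q : PMF ℕ) (k : ℕ) :
    (convPow q k).lfactorialMoment2 =
      k * q.lfactorialMoment2 + (k.descFactorial 2 : ℕ) * q.lmean ^ 2 := by
  induction k with
  | zero => rw [convPow, lfactorialMoment2, lexpect_pure]; simp
  | succ k ih =>
    rw [convPow, lfactorialMoment2_bind]
    simp only [lfactorialMoment2_map_add, lexpect_add, lexpect_const, lexpect_const_mul,
      lexpect_mul_const, lexpect_natCast, lexpect_descFactorial_two, ih, lmean_convPow,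
      Nat.descFactorial_two_add k 1, Nat.descFactorial_of_lt one_lt_two]
    push_cast
    ring

theorem lmean_bpre_succ (env : ℕ → PMF ℕ) (z n : ℕ) :
    (bpre env z (n + 1)).lmean = (env n).lmean * (bpre env z n).lmean := by
  rw [bpre, lmean_bind]
  simp only [lmean_convPow, lexpect_mul_const, lexpect_natCast]
  ring

theorem lfactorialMoment2_bpre_succ (env : ℕ → PMF ℕ) (z n : ℕ) :
    (bpre env z (n + 1)).lfactorialMoment2 =
      (env n).lfactorialMoment2 * (bpre env z n).lmean +
        (env n).lmean ^ 2 * (bpre env z n).lfactorialMoment2 := by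
  rw [bpre, lfactorialMoment2_bind]
  simp only [lfactorialMoment2_convPow, lexpect_add, lexpect_mul_const, lexpect_natCast,
    lexpect_descFactorial_two]
  ring

section Walk

variable {env : ℕ → PMF ℕ}

theorem Swalk_succ (n : ℕ) : Swalk env (n + 1) = Swalk env n + Real.log (pmfMean (env n)) :=
  Finset.sum_range_succ _ n

theorem exp_Swalk_succ {n : ℕ} (h : 0 < pmfMean (env n)) :
    Real.exp (Swalk env (n + 1)) = pmfMean (env n) * Real.exp (Swalk env n) := by
  rw [Swalk_succ, Real.exp_add, Real.exp_log h, mul_comm]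

theorem Lmin_le_Swalk {k n : ℕ} (h : k ≤ n) : Lmin env n ≤ Swalk env k :=
  Finset.inf'_le _ (Finset.mem_range_succ_iff.mpr h)

theorem Lmin_succ_le (n : ℕ) : Lmin env (n + 1) ≤ Lmin env n :=
  Finset.le_inf' _ _ fun _ hk =>
    Lmin_le_Swalk (Nat.le_succ_of_le (Finset.mem_range_succ_iff.mp hk))

noncomputable def factorialMomentBound (env : ℕ → PMF ℕ) (d : ℝ) (n : ℕ) : ℝ :=
  2 * d * (n + 1) * Real.exp (Swalk env n) * Real.exp (Swalk env n - Lmin env n)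

theorem factorialMomentBound_nonneg {d : ℝ} (hd : 0 ≤ d) (n : ℕ) :
    0 ≤ factorialMomentBound env d n := by
  unfold factorialMomentBound; positivity

theorem factorialMomentBound_step {d : ℝ} (hd : 0 ≤ d) {n : ℕ} (hμ : 0 < pmfMean (env n)) :
    d * (pmfMean (env n) + pmfMean (env n) ^ 2) * Real.exp (Swalk env n) +
        pmfMean (env n) ^ 2 * factorialMomentBound env d n ≤
      factorialMomentBound env d (n + 1) := by
  set μ := pmfMean (env n)
  set E := Real.exp (Swalk env (n + 1))
  set R := Real.exp (Swalk env (n + 1) - Lmin env (n + 1))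
  have hS : Swalk env (n + 1) = Swalk env n + Real.log μ := Swalk_succ n
  have hL_succ : Lmin env (n + 1) ≤ Lmin env n := Lmin_succ_le n
  have hL_now : Lmin env (n + 1) ≤ Swalk env (n + 1) := Lmin_le_Swalk le_rfl
  have hL_prev : Lmin env (n + 1) ≤ Swalk env n := Lmin_le_Swalk (Nat.le_succ n)
  have hE : μ * Real.exp (Swalk env n) = E := (exp_Swalk_succ hμ).symm
  have hR_one : 1 ≤ R := Real.one_le_exp_iff.mpr (by linarith)
  have hR_mean : μ ≤ R :=
    calc μ = Real.exp (Real.log μ) := (Real.exp_log hμ).symm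
      _ ≤ R := Real.exp_le_exp.mpr (by linarith)
  have hR_walk : μ * Real.exp (Swalk env n - Lmin env n) ≤ R :=
    calc μ * Real.exp (Swalk env n - Lmin env n)
        = Real.exp (Real.log μ + (Swalk env n - Lmin env n)) := by
          rw [Real.exp_add, Real.exp_log hμ]
      _ ≤ R := Real.exp_le_exp.mpr (by linarith)
  have hdE : 0 ≤ d * E := by positivity
  have hc : 0 ≤ 2 * d * (n + 1) * E := by positivity
  calc d * (μ + μ ^ 2) * Real.exp (Swalk env n) + μ ^ 2 * factorialMomentBound env d n
      = d * E * 1 + d * E * μ +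
          2 * d * (n + 1) * E * (μ * Real.exp (Swalk env n - Lmin env n)) := by
        rw [factorialMomentBound, ← hE]; ring
    _ ≤ d * E * R + d * E * R + 2 * d * (n + 1) * E * R :=
        add_le_add (add_le_add (mul_le_mul_of_nonneg_left hR_one hdE)
          (mul_le_mul_of_nonneg_left hR_mean hdE)) (mul_le_mul_of_nonneg_left hR_walk hc)
    _ = factorialMomentBound env d (n + 1) := by
        rw [factorialMomentBound]; push_cast; ring

end Walk

section Moments

variable {env : ℕ → PMF ℕ}

theorem lmean_bpre_one (hm : ∀ i, Summable (fun j : ℕ => (j : ℝ) * ((env i) j).toReal))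
    (hmpos : ∀ i, 0 < pmfMean (env i)) (n : ℕ) :
    (bpre env 1 n).lmean = ENNReal.ofReal (Real.exp (Swalk env n)) := by
  induction n with
  | zero => simp [bpre, lmean, lexpect_pure, Swalk]
  | succ n ih =>
    rw [lmean_bpre_succ, ih, lmean_eq_ofReal (hm n), ← ENNReal.ofReal_mul (hmpos n).le,
      exp_Swalk_succ (hmpos n)]

theorem lfactorialMoment2_bpre_one_le
    (hm : ∀ i, Summable (fun j : ℕ => (j : ℝ) * ((env i) j).toReal))
    (hmpos : ∀ i, 0 < pmfMean (env i)) {d : ℝ} (hd : 0 ≤ d)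
    (hM : ∀ i, Summable (fun j : ℕ => (j : ℝ) * ((j : ℝ) - 1) * ((env i) j).toReal))
    (hfm : ∀ i, (∑' j : ℕ, (j : ℝ) * ((j : ℝ) - 1) * ((env i) j).toReal) ≤
      d * (pmfMean (env i) + pmfMean (env i) ^ 2)) (n : ℕ) :
    (bpre env 1 n).lfactorialMoment2 ≤ ENNReal.ofReal (factorialMomentBound env d n) := by
  induction n with
  | zero => simp [bpre, lfactorialMoment2, lexpect_pure]
  | succ n ih =>
    have hμ := hmpos n
    rw [lfactorialMoment2_bpre_succ, lmean_bpre_one hm hmpos, lmean_eq_ofReal (hm n),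
      lfactorialMoment2_eq_ofReal (hM n)]
    calc _ ≤ ENNReal.ofReal (d * (pmfMean (env n) + pmfMean (env n) ^ 2)) *
            ENNReal.ofReal (Real.exp (Swalk env n)) +
          ENNReal.ofReal (pmfMean (env n)) ^ 2 * ENNReal.ofReal (factorialMomentBound env d n) := by
          gcongr
          exact hfm n
      _ = ENNReal.ofReal (d * (pmfMean (env n) + pmfMean (env n) ^ 2) * Real.exp (Swalk env n) +
            pmfMean (env n) ^ 2 * factorialMomentBound env d n) := by
          rw [← ENNReal.ofReal_pow hμ.le, ← ENNReal.ofReal_mul (by positivity),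
            ← ENNReal.ofReal_mul (by positivity), ← ENNReal.ofReal_add (by positivity)
              (mul_nonneg (sq_nonneg _) (factorialMomentBound_nonneg hd n))]
      _ ≤ ENNReal.ofReal (factorialMomentBound env d (n + 1)) :=
          ENNReal.ofReal_le_ofReal (factorialMomentBound_step hd hμ)

end Moments

/-- If the second factorial moments of the offspring distributions satisfy
`f_i''(1) ≤ d (f_i'(1) + f_i'(1)²)` for all `i`, then conditionally on the
environment, `E[Z_n(Z_n - 1) | env, Z_0 = 1] = f_{0,n}''(1) ≤ 2d (n+1) e^{S_n} e^{S_n - L_n}`. -/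
theorem bpre_factorial_moment_bound (env : ℕ → PMF ℕ) (d : ℝ) (hd : 0 < d)
    (hm : ∀ i, Summable (fun j : ℕ => (j : ℝ) * ((env i) j).toReal))
    (hmpos : ∀ i, 0 < pmfMean (env i))
    (hM : ∀ i, Summable (fun j : ℕ => (j : ℝ) * ((j : ℝ) - 1) * ((env i) j).toReal))
    (hfm : ∀ i, (∑' j : ℕ, (j : ℝ) * ((j : ℝ) - 1) * ((env i) j).toReal) ≤
      d * (pmfMean (env i) + pmfMean (env i) ^ 2))
    (n : ℕ) :
    (∑' k : ℕ, (k : ℝ) * ((k : ℝ) - 1) * ((bpre env 1 n) k).toReal) ≤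
      2 * d * (n + 1) * Real.exp (Swalk env n) * Real.exp (Swalk env n - Lmin env n) := by
  rw [← toReal_lfactorialMoment2]
  exact ENNReal.toReal_le_of_le_ofReal (factorialMomentBound_nonneg hd.le n)
    (lfactorialMoment2_bpre_one_le hm hmpos hd.le hM hfm n)
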